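/- Let A be a holomorphic Fredholm pencil on U with z₀ an isolated point of the spectrum, Taylor coefficients Aⱼ at z₀, and inverse N(z) = Σ_{j≥−m} Nⱼ(z−z₀)^j. If B = ran A₀ ⊕ A₁(ker A₀), then m = 1, i.e. A(z)⁻¹ has a simple pole at z₀. -/

import Mathlib

/-!
If the pole order were `m ≥ 2`, then `(z - z₀)^m N(z)` is a convergent power series in `z - z₀`
and tends to `N₋ₘ`. Applying it to `A(z) u` gives `(z - z₀)^m u → 0`, so `N₋ₘ` kills `ran A₀`;
for `v ∈ ker A₀` applying it to the difference quotient `(A(z) v - A₀ v)/(z - z₀) → A₁ v` gives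
`(z - z₀)^(m-1) v → 0`, so `N₋ₘ` kills `A₁ (ker A₀)`. These two spaces span the whole space,
hence `N₋ₘ = 0`, contradicting the choice of `m`.
-/

open scoped Topology

/-- A bounded operator is Fredholm if its kernel and cokernel are finite dimensional. -/
def IsFredholmOp {E : Type*} [NormedAddCommGroup E] [NormedSpace ℂ E]
    (A : E →L[ℂ] E) : Prop :=
  FiniteDimensional ℂ (LinearMap.ker A.toLinearMap) ∧ FiniteDimensional ℂ (E ⧸ LinearMap.range A.toLinearMap)

open Filter

section

variable {𝕜 F : Type*} [NontriviallyNormedField 𝕜] [NormedAddCommGroup F] [NormedSpace 𝕜 F]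

theorem hasSum_pow_smul_shift_of_hasSum_zpow_smul {a : ℤ → F} {m : ℕ}
    (hlow : ∀ j : ℤ, j < -(m : ℤ) → a j = 0) {w : 𝕜} (hw : w ≠ 0) {s : F}
    (hs : HasSum (fun j : ℤ => w ^ j • a j) s) :
    HasSum (fun n : ℕ => w ^ n • a (n - m)) (w ^ m • s) := by
  have hinj : Function.Injective (fun n : ℕ => (n : ℤ) - m) := fun i j h => by
    simpa using h
  have hvanish : ∀ j ∉ Set.range (fun n : ℕ => (n : ℤ) - m), w ^ m • w ^ j • a j = 0 := by
    intro j hj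
    have hjlt : j < -(m : ℤ) := by
      by_contra! hge
      exact hj ⟨(j + m).toNat, show ((j + m).toNat : ℤ) - m = j by omega⟩
    simp [hlow j hjlt]
  refine ((hinj.hasSum_iff hvanish).mpr (hs.const_smul (w ^ m))).congr_fun fun n => ?_
  simp only [Function.comp_apply, smul_smul, ← zpow_natCast, ← zpow_add₀ hw, add_sub_cancel]

theorem tendsto_nhdsNE_of_hasSum_pow_smul [CompleteSpace F] {c : ℕ → F} {f : 𝕜 → F} {z₀ : 𝕜}
    (hf : ∀ᶠ z in 𝓝[≠] z₀, HasSum (fun n : ℕ => (z - z₀) ^ n • c n) (f z)) :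
    Tendsto f (𝓝[≠] z₀) (𝓝 (c 0)) := by
  let p : FormalMultilinearSeries 𝕜 𝕜 F := fun n => ContinuousMultilinearMap.mkPiRing 𝕜 (Fin n) (c n)
  have hp : ∀ z, (fun n => p n (fun _ => z - z₀)) = fun n => (z - z₀) ^ n • c n := fun z => by
    ext n; simp [p, ContinuousMultilinearMap.mkPiRing_apply]
  obtain ⟨z₁, hz₁, hz₁ne⟩ := (hf.and self_mem_nhdsWithin).exists
  have hrad : 0 < p.radius := by
    refine lt_of_lt_of_le ?_ (p.le_radius_of_tendsto (r := ‖z₁ - z₀‖₊) (l := 0) ?_)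
    · simpa [sub_eq_zero] using hz₁ne
    simpa [p, norm_smul, mul_comm] using hz₁.summable.tendsto_atTop_zero.norm
  have hFP := (p.hasFPowerSeriesOnBall hrad).hasFPowerSeriesAt
  have hsum0 : p.sum 0 = c 0 := by
    simpa [p] using (hFP.coeff_zero (fun _ => 0)).symm
  have hlim : Tendsto (fun z => p.sum (z - z₀)) (𝓝 z₀) (𝓝 (c 0)) := by
    rw [← hsum0]
    exact hFP.continuousAt.tendsto.comp (tendsto_sub_nhds_zero_iff.mpr tendsto_id)
  refine (hlim.mono_left nhdsWithin_le_nhds).congr' ?_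
  filter_upwards [hf] with z hz
  rw [← hp] at hz
  exact hz.tsum_eq

theorem tendsto_pow_smul_of_hasSum_laurent [CompleteSpace F] {a : ℤ → F} {m : ℕ}
    (hlow : ∀ j : ℤ, j < -(m : ℤ) → a j = 0) {f : 𝕜 → F} {z₀ : 𝕜}
    (hf : ∀ᶠ z in 𝓝[≠] z₀, HasSum (fun j : ℤ => (z - z₀) ^ j • a j) (f z)) :
    Tendsto (fun z => (z - z₀) ^ m • f z) (𝓝[≠] z₀) (𝓝 (a (-m))) := by
  have hshift : ∀ᶠ z in 𝓝[≠] z₀,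
      HasSum (fun n : ℕ => (z - z₀) ^ n • a (n - m)) ((z - z₀) ^ m • f z) := by
    filter_upwards [hf, self_mem_nhdsWithin] with z hz hne
    exact hasSum_pow_smul_shift_of_hasSum_zpow_smul hlow (sub_ne_zero.mpr hne) hz
  simpa using tendsto_nhdsNE_of_hasSum_pow_smul hshift

end

section

variable {𝕜 E F : Type*} [NontriviallyNormedField 𝕜] [NormedAddCommGroup E] [NormedSpace 𝕜 E]
  [NormedAddCommGroup F] [NormedSpace 𝕜 F] {A : 𝕜 → E →L[𝕜] F} {L : 𝕜 → F →L[𝕜] E}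
  {T : F →L[𝕜] E} {z₀ : 𝕜} {m : ℕ}

theorem range_le_ker_of_tendsto_pow_smul_leftInverse (hA : ContinuousAt A z₀) (hm : m ≠ 0)
    (hinv : ∀ᶠ z in 𝓝[≠] z₀, L z ∘L A z = 1)
    (hL : Tendsto (fun z => (z - z₀) ^ m • L z) (𝓝[≠] z₀) (𝓝 T)) :
    LinearMap.range (A z₀).toLinearMap ≤ LinearMap.ker T.toLinearMap := by
  rintro _ ⟨u, rfl⟩
  have hT : Tendsto (fun z => ((z - z₀) ^ m • L z) (A z u)) (𝓝[≠] z₀) (𝓝 (T (A z₀ u))) :=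
    (isBoundedBilinearMap_apply.continuous.tendsto _).comp
      (hL.prodMk_nhds ((hA.clm_apply continuousAt_const).tendsto.mono_left nhdsWithin_le_nhds))
  have hT0 : Tendsto (fun z => ((z - z₀) ^ m • L z) (A z u)) (𝓝[≠] z₀) (𝓝 0) := by
    have hpow : Tendsto (fun z => (z - z₀) ^ m) (𝓝[≠] z₀) (𝓝 0) :=
      (((continuous_sub_right z₀).pow m).tendsto' z₀ 0 (by simp [hm])).mono_left nhdsWithin_le_nhds
    refine (by simpa using hpow.smul_const u : Tendsto _ _ (𝓝 (0 : E))).congr' ?_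
    filter_upwards [hinv] with z hz
    simp [← ContinuousLinearMap.comp_apply, hz]
  exact tendsto_nhds_unique hT hT0

theorem map_ker_le_ker_of_tendsto_pow_smul_leftInverse {A' : E →L[𝕜] F} (hA : HasDerivAt A A' z₀)
    (hm : 2 ≤ m) (hinv : ∀ᶠ z in 𝓝[≠] z₀, L z ∘L A z = 1)
    (hL : Tendsto (fun z => (z - z₀) ^ m • L z) (𝓝[≠] z₀) (𝓝 T)) :
    Submodule.map A'.toLinearMap (LinearMap.ker (A z₀).toLinearMap) ≤
      LinearMap.ker T.toLinearMap := by
  rintro _ ⟨v, hv, rfl⟩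
  have hv : A z₀ v = 0 := hv
  have hslope : Tendsto (slope (fun z => A z v) z₀) (𝓝[≠] z₀) (𝓝 (A' v)) :=
    hasDerivAt_iff_tendsto_slope.mp (by simpa using hA.clm_apply (hasDerivAt_const z₀ v))
  have hT : Tendsto (fun z => ((z - z₀) ^ m • L z) (slope (fun w => A w v) z₀ z)) (𝓝[≠] z₀)
      (𝓝 (T (A' v))) :=
    (isBoundedBilinearMap_apply.continuous.tendsto _).comp (hL.prodMk_nhds hslope)
  have hT0 : Tendsto (fun z => ((z - z₀) ^ m • L z) (slope (fun w => A w v) z₀ z)) (𝓝[≠] z₀)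
      (𝓝 0) := by
    have hpow : Tendsto (fun z => (z - z₀) ^ (m - 1)) (𝓝[≠] z₀) (𝓝 0) :=
      (((continuous_sub_right z₀).pow (m - 1)).tendsto' z₀ 0 (by simp; omega)).mono_left
        nhdsWithin_le_nhds
    refine (by simpa using hpow.smul_const v : Tendsto _ _ (𝓝 (0 : E))).congr' ?_
    filter_upwards [hinv, self_mem_nhdsWithin] with z hz hne
    have hLA : L z (A z v) = v := by simp [← ContinuousLinearMap.comp_apply, hz]
    rw [slope_def_module, hv, sub_zero]
    simp only [smul_apply, map_smul, hLA, smul_smul]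
    rw [← mul_pow_sub_one (by omega : m ≠ 0), inv_mul_cancel_left₀ (sub_ne_zero.mpr hne)]
  exact tendsto_nhds_unique hT hT0

end

theorem stmt_8_general {E : Type*} [NormedAddCommGroup E] [NormedSpace ℂ E] [CompleteSpace E]
    (U : Set ℂ)
    (A : ℂ → E →L[ℂ] E) (hol : AnalyticOnNhd ℂ A U)
    (z₀ : ℂ) (hz₀ : z₀ ∈ U)
    -- Laurent expansion of the inverse `N(z)` of pole order `m` at `z₀`
    (m : ℕ) (hm : 1 ≤ m)
    (N : ℤ → E →L[ℂ] E) (hNm : N (-(m : ℤ)) ≠ 0) (hlow : ∀ j : ℤ, j < -(m : ℤ) → N j = 0)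
    (Ninv : ℂ → E →L[ℂ] E)
    (hNinv : ∀ᶠ z in 𝓝[≠] z₀, Ninv z ∘L A z = 1 ∧ A z ∘L Ninv z = 1)
    (hLaurent : ∀ᶠ z in 𝓝[≠] z₀, HasSum (fun j : ℤ => (z - z₀) ^ j • N j) (Ninv z))
    -- the direct sum condition `B = ran A₀ ⊕ A₁ (ker A₀)`
    (hdirect : IsCompl (LinearMap.range (A z₀).toLinearMap)
      (Submodule.map (deriv A z₀).toLinearMap (LinearMap.ker (A z₀).toLinearMap))) :
    m = 1 := by
  by_contra hne
  have hlim := tendsto_pow_smul_of_hasSum_laurent hlow hLaurent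
  have hleft : ∀ᶠ z in 𝓝[≠] z₀, Ninv z ∘L A z = 1 := hNinv.mono fun _ h => h.1
  have hA := hol z₀ hz₀
  have hrange := range_le_ker_of_tendsto_pow_smul_leftInverse hA.continuousAt (by omega) hleft hlim
  have hmap := map_ker_le_ker_of_tendsto_pow_smul_leftInverse hA.differentiableAt.hasDerivAt
    (by omega) hleft hlim
  apply hNm
  apply ContinuousLinearMap.coe_injective
  rw [ContinuousLinearMap.toLinearMap_zero, ← LinearMap.ker_eq_top, eq_top_iff, ← hdirect.sup_eq_top]
  exact sup_le hrange hmap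

/-- if `B = ran A₀ ⊕ A₁(ker A₀)` (with `A₀ = A(z₀)`, `A₁ = A'(z₀)`), then the
inverse of the holomorphic Fredholm pencil `A` has a simple pole at the isolated spectral
point `z₀`, i.e. the pole order `m` equals `1`. -/
theorem stmt_8 {E : Type*} [NormedAddCommGroup E] [NormedSpace ℂ E] [CompleteSpace E]
    (U : Set ℂ) (hUopen : IsOpen U) (hUconn : IsConnected U)
    (A : ℂ → E →L[ℂ] E) (hol : AnalyticOnNhd ℂ A U)
    (hFred : ∀ z ∈ U, IsFredholmOp (A z))
    (z₀ : ℂ) (hz₀ : z₀ ∈ U)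
    (hsing : ¬ IsUnit (A z₀)) (hiso : ∀ᶠ z in 𝓝[≠] z₀, IsUnit (A z))
    -- Laurent expansion of the inverse `N(z)` of pole order `m` at `z₀`
    (m : ℕ) (hm : 1 ≤ m)
    (N : ℤ → E →L[ℂ] E) (hNm : N (-(m : ℤ)) ≠ 0) (hlow : ∀ j : ℤ, j < -(m : ℤ) → N j = 0)
    (Ninv : ℂ → E →L[ℂ] E)
    (hNinv : ∀ᶠ z in 𝓝[≠] z₀, Ninv z ∘L A z = 1 ∧ A z ∘L Ninv z = 1)
    (hLaurent : ∀ᶠ z in 𝓝[≠] z₀, HasSum (fun j : ℤ => (z - z₀) ^ j • N j) (Ninv z))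
    -- the direct sum condition `B = ran A₀ ⊕ A₁ (ker A₀)`
    (hdirect : IsCompl (LinearMap.range (A z₀).toLinearMap)
      (Submodule.map (deriv A z₀).toLinearMap (LinearMap.ker (A z₀).toLinearMap))) :
    m = 1 :=
  stmt_8_general U A hol z₀ hz₀ m hm N hNm hlow Ninv hNinv hLaurent hdirect
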